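/- Let X₁, X₂, … be i.i.d. copies of the total progeny of a critical Galton–Watson tree with Poisson(1) offspring distribution, and set S_n = X₁ + ⋯ + X_n. Then ∑_{n=1}^∞ 1/√(S_n) = ∞ almost surely. -/

import Mathlib

/-!
By the cycle lemma, `k ℙ(X = k) ≤ ℙ(ξ₁ + ⋯ + ξ_k = k - 1) = e^{-k} k^{k-1} / (k-1)!`, which
Stirling's formula bounds by `1 / (2√k)`. Hence `ℙ(X > M) ≤ 1/√M` and `𝔼[X; X ≤ M] ≤ √M`, and
truncating at `M = C n²` gives `ℙ(S_n > C n²) ≤ 2/√C`. So almost surely there is a `C` with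
`S_{2N} ≤ C (2N)²` for infinitely many `N`; each such `N` contributes a block
`∑_{N < n ≤ 2N} 1/√S_n ≥ 1/(2√C)`, and the series diverges.
-/

open MeasureTheory ProbabilityTheory Filter Real Finset
open scoped ENNReal Nat

lemma Nat.sInf_eq_iff_isLeast {s : Set ℕ} {k : ℕ} (hk : k ≠ 0) : sInf s = k ↔ IsLeast s k := by
  refine ⟨fun h => ?_, IsLeast.csInf_eq⟩
  have hs : s.Nonempty := Set.nonempty_iff_ne_empty.2 fun he => hk (by simp [← h, he])
  exact h ▸ isLeast_csInf hs

lemma prod_exp_neg_one_div_factorial {k m : ℕ} {b : Fin k → ℕ} (hb : ∑ j, b j = m) :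
    ∏ j, exp (-1) / (b j)! = exp (-k) / m ! * Nat.multinomial univ b := by
  have hspec : (∏ j, ((b j)! : ℝ)) * Nat.multinomial univ b = m ! := by
    exact_mod_cast hb ▸ Nat.multinomial_spec univ b
  have hexp : exp (-1) ^ k = exp (-k) := by rw [← exp_nat_mul]; ring_nf
  rw [prod_div_distrib, prod_const, card_univ, Fintype.card_fin, hexp, ← hspec]
  have : (0 : ℝ) < ∏ j, ((b j)! : ℝ) := prod_pos fun j _ => by positivity
  have : (0 : ℝ) < Nat.multinomial univ b := by exact_mod_cast Nat.multinomial_pos univ b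
  field_simp

/-- The sum of `k` independent `Poisson(1)` variables is `Poisson(k)`. -/
lemma sum_piAntidiag_prod_exp_neg_one_div_factorial (k m : ℕ) :
    ∑ b ∈ piAntidiag (univ : Finset (Fin k)) m, ∏ j, exp (-1) / (b j)!
      = exp (-k) * k ^ m / m ! := by
  rw [sum_congr rfl fun b hb => prod_exp_neg_one_div_factorial (mem_piAntidiag.1 hb).1,
    ← mul_sum]
  have hk : (k : ℝ) ^ m
      = ∑ b ∈ piAntidiag (univ : Finset (Fin k)) m, (Nat.multinomial univ b : ℝ) := by
    simpa using sum_pow_eq_sum_piAntidiag (univ : Finset (Fin k)) (fun _ => (1 : ℝ)) m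
  rw [← hk]
  ring

lemma exp_neg_mul_pow_div_factorial_le {k : ℕ} (hk : k ≠ 0) :
    exp (-k) * k ^ (k - 1) / (k - 1)! ≤ 1 / (2 * √k) := by
  obtain ⟨n, rfl⟩ := Nat.exists_eq_add_one_of_ne_zero hk
  set x : ℝ := ((n + 1 : ℕ) / exp 1) ^ (n + 1) with hx
  have hx0 : 0 < x := by positivity
  have hrewrite : exp (-(n + 1 : ℕ)) * (n + 1 : ℕ) ^ (n + 1 - 1) / (n + 1 - 1)! = x / (n + 1)! := by
    rw [hx, Nat.add_sub_cancel, Nat.factorial_succ, div_pow, ← exp_nat_mul, exp_neg]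
    push_cast
    field_simp
    ring
  have hsqrt : 2 * √(n + 1 : ℕ) ≤ √(2 * π * (n + 1 : ℕ)) := by
    rw [le_sqrt (by positivity) (by positivity), mul_pow, sq_sqrt (by positivity)]
    have : (0 : ℝ) ≤ (n + 1 : ℕ) := by positivity
    nlinarith [pi_gt_three]
  calc exp (-(n + 1 : ℕ)) * (n + 1 : ℕ) ^ (n + 1 - 1) / (n + 1 - 1)! = x / (n + 1)! := hrewrite
    _ ≤ x / (√(2 * π * (n + 1 : ℕ)) * x) := by
        gcongr
        exact Stirling.le_factorial_stirling (n + 1)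
    _ = 1 / √(2 * π * (n + 1 : ℕ)) := by field_simp
    _ ≤ 1 / (2 * √(n + 1 : ℕ)) := by gcongr

lemma sum_Icc_one_div_two_mul_sqrt_le (M : ℕ) : ∑ k ∈ Icc 1 M, 1 / (2 * √k) ≤ √M := by
  induction M with
  | zero => simp
  | succ M ih =>
    rw [sum_Icc_succ_top (by omega)]
    set a := √(M + 1 : ℕ)
    have ha : 0 < a := sqrt_pos.2 (by positivity)
    have hab : √M ≤ a := sqrt_le_sqrt (by simp)
    have hsq : a ^ 2 = √M ^ 2 + 1 := by
      rw [sq_sqrt (by positivity), sq_sqrt (by positivity)]; push_cast; ring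
    have : 1 / (2 * a) ≤ a - √M := by
      rw [div_le_iff₀ (by positivity)]
      nlinarith [sqrt_nonneg M]
    linarith

lemma sum_range_one_div_mul_sqrt_le {M : ℕ} (hM : M ≠ 0) (D : ℕ) :
    ∑ d ∈ range D, 1 / (2 * (M + 1 + d : ℕ) * √(M + 1 + d : ℕ)) ≤ 1 / √M - 1 / √(M + D : ℕ) := by
  induction D with
  | zero => simp
  | succ D ih =>
    rw [sum_range_succ, show M + (D + 1) = M + 1 + D by ring]
    set a := √(M + 1 + D : ℕ)
    set b := √(M + D : ℕ)
    have hb : 0 < b := sqrt_pos.2 (by positivity)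
    have hab : b ≤ a := sqrt_le_sqrt (by simp)
    have ha2 : a ^ 2 = (M + 1 + D : ℕ) := sq_sqrt (by positivity)
    have hsq : a ^ 2 = b ^ 2 + 1 := by rw [ha2, sq_sqrt (by positivity)]; push_cast; ring
    have : 1 / (2 * a ^ 2 * a) ≤ 1 / b - 1 / a := by
      rw [div_sub_div _ _ hb.ne' (by positivity), div_le_div_iff₀ (by positivity) (by positivity)]
      nlinarith [mul_le_mul_of_nonneg_left hab hb.le]
    rw [ha2] at this
    linarith

namespace Lukasiewicz

/-- The times `n ≥ 1` at which the Łukasiewicz path `n ↦ ∑_{j<n} (x j - 1)` reaches `-1`; the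
total progeny of a Galton–Watson tree with offspring sequence `x` is the least of them. -/
def hittingTimes (x : ℕ → ℕ) : Set ℕ := {n | 1 ≤ n ∧ ∑ j ∈ range n, x j + 1 = n}

def zeroExtend {k : ℕ} (a : Fin k → ℕ) (j : ℕ) : ℕ := if h : j < k then a ⟨j, h⟩ else 0

def firstPassages (k : ℕ) : Set (Fin k → ℕ) := {a | IsLeast (hittingTimes (zeroExtend a)) k}

def bridges (k : ℕ) : Set (Fin k → ℕ) := {b | ∑ j, b j + 1 = k}

lemma mem_hittingTimes_congr {x y : ℕ → ℕ} {n : ℕ} (h : ∀ j < n, x j = y j) :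
    n ∈ hittingTimes x ↔ n ∈ hittingTimes y := by
  simp only [hittingTimes, Set.mem_ofPred_eq,
    sum_congr rfl fun j hj => h j (mem_range.1 hj)]

lemma isLeast_hittingTimes_congr {x y : ℕ → ℕ} {k : ℕ} (h : ∀ j < k, x j = y j) :
    IsLeast (hittingTimes x) k ↔ IsLeast (hittingTimes y) k := by
  have hle : ∀ l ≤ k, l ∈ hittingTimes x ↔ l ∈ hittingTimes y := fun l hl =>
    mem_hittingTimes_congr fun j hj => h j (by omega)
  simp only [IsLeast, lowerBounds, Set.mem_ofPred_eq, hle k le_rfl]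
  refine and_congr_right fun _ => forall_congr' fun l => ?_
  rcases le_total l k with hlk | hkl
  · rw [hle l hlk]
  · simp [hkl]

lemma le_sum_range_of_forall_notMem {x : ℕ → ℕ} {m : ℕ}
    (h : ∀ l ≤ m, l ∉ hittingTimes x) : m ≤ ∑ j ∈ range m, x j := by
  induction m with
  | zero => exact le_rfl
  | succ m ih =>
    have hm := ih fun l hl => h l (by omega)
    have hnot := h (m + 1) le_rfl
    simp only [hittingTimes, Set.mem_ofPred_eq, sum_range_succ] at hnot ⊢
    omega

lemma sum_range_zeroExtend {k : ℕ} (a : Fin k → ℕ) : ∑ j ∈ range k, zeroExtend a j = ∑ j, a j := by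
  rw [← Fin.sum_univ_eq_sum_range]
  exact sum_congr rfl fun j _ => by simp [zeroExtend]

lemma firstPassages_subset_bridges (k : ℕ) : firstPassages k ⊆ bridges k := fun a ha => by
  simpa [bridges, sum_range_zeroExtend] using ha.1.2

lemma zeroExtend_comp_add {k : ℕ} [NeZero k] (a : Fin k → ℕ) (c : Fin k) {j : ℕ}
    (hj : j + c < k) : zeroExtend (fun i => a (i + c)) j = zeroExtend a (c + j) := by
  simp only [zeroExtend, dif_pos (show j < k by omega), dif_pos (show c + j < k by omega)]
  congr 1
  ext
  simp [Fin.val_add, Nat.mod_eq_of_lt hj, add_comm]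

lemma sum_range_zeroExtend_comp_add {k : ℕ} [NeZero k] (a : Fin k → ℕ) (c : Fin k) :
    ∑ j ∈ range (k - c), zeroExtend (fun i => a (i + c)) j + ∑ j ∈ range c, zeroExtend a j
      = ∑ j, a j := by
  rw [← sum_range_zeroExtend, ← sum_range_add_sum_Ico _ c.isLt.le, sum_Ico_eq_sum_range,
    add_comm]
  congr 1
  exact sum_congr rfl fun j hj => zeroExtend_comp_add a c (by simp at hj; omega)

/-- The easy half of the cycle lemma. -/
lemma eq_zero_of_comp_add_mem_firstPassages {k : ℕ} [NeZero k] {a : Fin k → ℕ} {c : Fin k}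
    (ha : a ∈ firstPassages k) (hc : (fun i => a (i + c)) ∈ firstPassages k) : c = 0 := by
  by_contra hne
  have hc0 : 0 < (c : ℕ) := Nat.pos_of_ne_zero (Fin.val_ne_zero_iff.2 hne)
  have h₁ := le_sum_range_of_forall_notMem (m := k - c) fun l hl hlm => by
    have := hc.2 hlm; omega
  have h₂ := le_sum_range_of_forall_notMem (m := c) fun l hl hlm => by
    have := ha.2 hlm; omega
  have h₃ := firstPassages_subset_bridges k ha
  have := sum_range_zeroExtend_comp_add a c
  simp only [bridges, Set.mem_ofPred_eq] at h₃
  omega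

lemma prod_comp_add {k : ℕ} [NeZero k] (p : ℕ → ℝ≥0∞) (a : Fin k → ℕ) (c : Fin k) :
    ∏ j, p (a (j + c)) = ∏ j, p (a j) :=
  Equiv.prod_comp (Equiv.addRight c) fun j => p (a j)

lemma comp_add_mem_bridges {k : ℕ} [NeZero k] {b : Fin k → ℕ} (hb : b ∈ bridges k) (c : Fin k) :
    (fun i => b (i + c)) ∈ bridges k := by
  simp only [bridges, Set.mem_ofPred_eq] at hb ⊢
  rwa [← Equiv.sum_comp (Equiv.addRight c) b] at hb

/-- The cycle lemma bound: rotation maps `firstPassages k × Fin k` injectively into `bridges k`,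
preserving product weights. -/
lemma card_mul_tsum_firstPassages_le {k : ℕ} [NeZero k] (p : ℕ → ℝ≥0∞) :
    k * ∑' a : firstPassages k, ∏ j, p (a.1 j) ≤ ∑' b : bridges k, ∏ j, p (b.1 j) := by
  let rotate : firstPassages k × Fin k → bridges k := fun ac =>
    ⟨fun i => ac.1.1 (i + ac.2), comp_add_mem_bridges (firstPassages_subset_bridges k ac.1.2) ac.2⟩
  have hrotate : Function.Injective rotate := by
    rintro ⟨⟨a, ha⟩, c⟩ ⟨⟨a', ha'⟩, c'⟩ h
    have h' : ∀ i, a (i + c) = a' (i + c') := fun i => congrFun (congrArg Subtype.val h) i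
    have ha'_eq : a' = fun i => a (i + (c - c')) := funext fun i => by
      rw [show i + (c - c') = i - c' + c by abel, h', sub_add_cancel]
    have hcc' : c = c' := sub_eq_zero.1 (eq_zero_of_comp_add_mem_firstPassages ha (ha'_eq ▸ ha'))
    subst hcc'
    simp_all
  calc (k : ℝ≥0∞) * ∑' a : firstPassages k, ∏ j, p (a.1 j)
      = ∑' (a : firstPassages k) (c : Fin k), ∏ j, p ((rotate (a, c)).1 j) := by
        rw [← ENNReal.tsum_mul_left]
        refine tsum_congr fun a => ?_
        simp [rotate, prod_comp_add]
    _ = ∑' ac, ∏ j, p ((rotate ac).1 j) := ENNReal.tsum_prod.symm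
    _ ≤ ∑' b : bridges k, ∏ j, p (b.1 j) :=
        ENNReal.tsum_comp_le_tsum_of_injective hrotate fun b => ∏ j, p (b.1 j)

lemma sInf_hittingTimes_eq_iff {x : ℕ → ℕ} {k : ℕ} (hk : k ≠ 0) :
    sInf (hittingTimes x) = k ↔ (fun j : Fin k => x j) ∈ firstPassages k := by
  rw [Nat.sInf_eq_iff_isLeast hk]
  exact isLeast_hittingTimes_congr fun j hj => by simp [zeroExtend, hj]

lemma sInf_hittingTimes_eq_one {x : ℕ → ℕ} (hx : x 0 = 0) : sInf (hittingTimes x) = 1 :=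
  IsLeast.csInf_eq ⟨⟨le_rfl, by simp [hx]⟩, fun _ hn => hn.1⟩

lemma bridges_eq_piAntidiag {k : ℕ} (hk : k ≠ 0) :
    bridges k = piAntidiag (univ : Finset (Fin k)) (k - 1) := by
  ext b
  have hsum : ∑ j, b j = univ.sum b := rfl
  simp only [bridges, Set.mem_ofPred_eq, mem_coe, mem_piAntidiag, hsum]
  exact ⟨fun h => ⟨by omega, fun j _ => mem_univ j⟩, fun h => by omega⟩

lemma tsum_bridges_prod_poisson {k : ℕ} (hk : k ≠ 0) :
    ∑' b : bridges k, ∏ j, ENNReal.ofReal (exp (-1) / (b.1 j)!)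
      = ENNReal.ofReal (exp (-k) * k ^ (k - 1) / (k - 1)!) := by
  rw [bridges_eq_piAntidiag hk,
    Finset.tsum_subtype' _ fun b : Fin k → ℕ => ∏ j, ENNReal.ofReal (exp (-1) / (b j)!),
    ← sum_piAntidiag_prod_exp_neg_one_div_factorial,
    ENNReal.ofReal_sum_of_nonneg fun _ _ => by positivity]
  exact sum_congr rfl fun b _ => (ENNReal.ofReal_prod_of_nonneg fun _ _ => by positivity).symm

end Lukasiewicz

lemma one_div_two_mul_sqrt_le_sum_Ioc {s : ℕ → ℕ} (hs : Monotone s) {N : ℕ} (hN : N ≠ 0)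
    (hsN : s N ≠ 0) {C : ℝ} (hC : 0 < C) (h2N : (s (2 * N) : ℝ) ≤ C * (2 * N) ^ 2) :
    1 / (2 * √C) ≤ ∑ n ∈ Ioc N (2 * N), 1 / √(s n) := by
  have hterm : ∀ n ∈ Ioc N (2 * N), 1 / (√C * (2 * N)) ≤ 1 / √(s n) := by
    intro n hn
    obtain ⟨hNn, hn2N⟩ := mem_Ioc.1 hn
    have hpos : (0 : ℝ) < s n := by exact_mod_cast (Nat.pos_of_ne_zero hsN).trans_le (hs hNn.le)
    refine one_div_le_one_div_of_le (sqrt_pos.2 hpos) ?_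
    calc √(s n) ≤ √(C * (2 * N) ^ 2) := sqrt_le_sqrt ((Nat.cast_le.2 (hs hn2N)).trans h2N)
      _ = √C * (2 * N) := by rw [sqrt_mul hC.le, sqrt_sq (by positivity)]
  calc 1 / (2 * √C) = #(Ioc N (2 * N)) * (1 / (√C * (2 * N))) := by
        rw [Nat.card_Ioc, show 2 * N - N = N by omega]
        field_simp
    _ ≤ ∑ n ∈ Ioc N (2 * N), 1 / √(s n) := by
        simpa using card_nsmul_le_sum _ _ _ hterm

/-- Block sums of a convergent series tend to zero, while the hypothesis makes infinitely many of
them at least `1 / (2 √C)`. -/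
lemma tendsto_sum_one_div_sqrt_atTop {s : ℕ → ℕ} (hs : Monotone s) {n₀ : ℕ} (hn₀ : s n₀ ≠ 0)
    {C : ℝ} (hC : 0 < C) (hfreq : ∃ᶠ N in atTop, (s (2 * N) : ℝ) ≤ C * (2 * N) ^ 2) :
    Tendsto (fun N => ∑ n ∈ Icc 1 N, 1 / √(s n)) atTop atTop := by
  set f := fun N => ∑ n ∈ Icc 1 N, 1 / √(s n)
  have hf : Monotone f := fun a b hab =>
    sum_le_sum_of_subset_of_nonneg (Icc_subset_Icc le_rfl hab) fun _ _ _ => by positivity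
  have hblock : ∀ N, f (2 * N) = f N + ∑ n ∈ Ioc N (2 * N), 1 / √(s n) := fun N => by
    have hIcc : ∀ m, Icc 1 m = Ioc 0 m := Icc_add_one_left_eq_Ioc 0
    simp only [f, hIcc]
    exact (sum_Ioc_consecutive (fun n => 1 / √(s n : ℝ)) N.zero_le (by omega)).symm
  refine tendsto_atTop_atTop_of_monotone hf fun b => ?_
  by_contra! hb
  have hlim := tendsto_atTop_ciSup hf ⟨b, Set.forall_mem_range.2 fun N => (hb N).le⟩
  have hdiff : Tendsto (fun N => f (2 * N) - f N) atTop (nhds 0) := by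
    simpa using (hlim.comp (tendsto_id.const_mul_atTop' two_pos)).sub hlim
  obtain ⟨N, hN, hN₀, hsmall⟩ := (hfreq.and_eventually ((eventually_ge_atTop (max n₀ 1)).and
    (hdiff.eventually (gt_mem_nhds (show (0 : ℝ) < 1 / (2 * √C) by positivity))))).exists
  have hsN : s N ≠ 0 := ((Nat.pos_of_ne_zero hn₀).trans_le (hs (le_of_max_le_left hN₀))).ne'
  have := one_div_two_mul_sqrt_le_sum_Ioc hs (by omega) hsN hC hN
  rw [hblock N] at hsmall
  linarith

section

variable {Ω : Type*} [MeasurableSpace Ω] {μ : Measure Ω}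

lemma measurable_sInf_setOf {P : ℕ → Ω → Prop} (hP : ∀ n, MeasurableSet {ω | P n ω}) :
    Measurable fun ω => sInf {n | P n ω} := by
  refine measurable_to_countable' fun k => ?_
  -- the second set accounts for `sInf ∅ = 0`
  have hpre : (fun ω => sInf {n | P n ω}) ⁻¹' {k}
      = {ω | P k ω ∧ ∀ l, P l ω → k ≤ l} ∪ {ω | k = 0 ∧ ∀ n, ¬ P n ω} := by
    ext ω
    simp only [Set.mem_preimage, Set.mem_singleton_iff, Set.mem_union, Set.mem_ofPred_eq]
    constructor
    · intro h
      rcases Set.eq_empty_or_nonempty {n | P n ω} with he | hne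
      · exact Or.inr ⟨by simp [← h, he], fun n hn => he.subset hn⟩
      · exact Or.inl (h ▸ isLeast_csInf hne)
    · rintro (hk | ⟨rfl, he⟩)
      · exact IsLeast.csInf_eq hk
      · simp [he]
  rw [hpre]
  simp only [Set.ofPred_and, Set.ofPred_forall, Set.ofPred_or, imp_iff_not_or]
  measurability

namespace ProbabilityTheory

lemma iIndepFun.measure_forall_eq {ι β : Type*} [Fintype ι] [MeasurableSpace β]
    [MeasurableSingletonClass β] {f : ι → Ω → β} (hf : iIndepFun f μ) (b : ι → β) :
    μ {ω | ∀ i, f i ω = b i} = ∏ i, μ {ω | f i ω = b i} := by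
  have : {ω | ∀ i, f i ω = b i} = ⋂ i, f i ⁻¹' {b i} := by ext; simp
  rw [this]
  exact hf.meas_iInter fun i => ⟨{b i}, measurableSet_singleton _, rfl⟩

lemma iIndepFun.ae_exists_mem {β : Type*} [MeasurableSpace β] {f : ℕ → Ω → β}
    (hf : iIndepFun f μ) (hmeas : ∀ n, Measurable (f n)) {s : Set β} (hs : MeasurableSet s)
    {q : ℝ≥0∞} (hq : 0 < q) (hle : ∀ n, q ≤ μ (f n ⁻¹' s)) : ∀ᵐ ω ∂μ, ∃ n, f n ω ∈ s := by
  have := hf.isProbabilityMeasure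
  have hbound : ∀ m, μ {ω | ¬ ∃ n, f n ω ∈ s} ≤ (1 - q) ^ m := fun m => calc
    μ {ω | ¬ ∃ n, f n ω ∈ s} ≤ μ (⋂ n ∈ range m, f n ⁻¹' sᶜ) :=
      measure_mono fun ω hω => by simp_all
    _ = ∏ n ∈ range m, μ (f n ⁻¹' sᶜ) :=
      hf.measure_inter_preimage_eq_mul _ fun _ _ => hs.compl
    _ ≤ ∏ n ∈ range m, (1 - q) := prod_le_prod' fun n _ => by
      rw [Set.preimage_compl, prob_compl_eq_one_sub (hmeas n hs)]
      exact tsub_le_tsub_left (hle n) 1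
    _ = (1 - q) ^ m := by rw [prod_const, card_range]
  have hlim : Tendsto (fun m => (1 - q) ^ m) atTop (nhds 0) :=
    ENNReal.tendsto_pow_atTop_nhds_zero_of_lt_one
      (ENNReal.sub_lt_self ENNReal.one_ne_top one_ne_zero hq.ne')
  exact ae_iff.2 (le_antisymm (ge_of_tendsto' hlim hbound) bot_le)

end ProbabilityTheory

def SizeBiasedMassBound (μ : Measure Ω) (X : Ω → ℕ) : Prop :=
  ∀ k : ℕ, k ≠ 0 → (k : ℝ≥0∞) * μ {ω | X ω = k} ≤ ENNReal.ofReal (1 / (2 * √k))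

namespace SizeBiasedMassBound

variable {X : Ω → ℕ}

lemma measure_eq_le (hX : SizeBiasedMassBound μ X) {k : ℕ} (hk : k ≠ 0) :
    μ {ω | X ω = k} ≤ ENNReal.ofReal (1 / (2 * k * √k)) := by
  have hk' : (0 : ℝ) < k := by positivity
  rw [show 1 / (2 * k * √k) = 1 / (2 * √k) / k by field_simp, ENNReal.ofReal_div_of_pos hk',
    ENNReal.ofReal_natCast, ENNReal.le_div_iff_mul_le (by simp [hk]) (by simp), mul_comm]
  exact hX k hk

lemma measure_lt_le (hX : SizeBiasedMassBound μ X) {M : ℕ} (hM : M ≠ 0) :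
    μ {ω | M < X ω} ≤ ENNReal.ofReal (1 / √M) := calc
  μ {ω | M < X ω} = μ (⋃ d : ℕ, {ω | X ω = M + 1 + d}) := by
    congr 1
    ext ω
    simp only [Set.mem_ofPred_eq, Set.mem_iUnion]
    exact ⟨fun h => ⟨X ω - (M + 1), by omega⟩, fun ⟨d, hd⟩ => by omega⟩
  _ ≤ ∑' d : ℕ, μ {ω | X ω = M + 1 + d} := measure_iUnion_le _
  _ ≤ ∑' d : ℕ, ENNReal.ofReal (1 / (2 * (M + 1 + d : ℕ) * √(M + 1 + d : ℕ))) :=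
    ENNReal.tsum_le_tsum fun d => hX.measure_eq_le (by omega)
  _ ≤ ENNReal.ofReal (1 / √M) := ENNReal.tsum_le_of_sum_range_le fun D => by
    rw [← ENNReal.ofReal_sum_of_nonneg fun _ _ => by positivity]
    refine ENNReal.ofReal_le_ofReal ((sum_range_one_div_mul_sqrt_le hM D).trans ?_)
    linarith [show 0 ≤ 1 / √(M + D : ℕ) by positivity]

lemma lintegral_truncation_le (hX : SizeBiasedMassBound μ X) (hXm : Measurable X) (M : ℕ) :
    ∫⁻ ω, ((if X ω ≤ M then X ω else 0 : ℕ) : ℝ≥0∞) ∂μ ≤ ENNReal.ofReal √M := by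
  let g : ℕ → ℝ≥0∞ := fun k => ((if k ≤ M then k else 0 : ℕ) : ℝ≥0∞)
  calc ∫⁻ ω, g (X ω) ∂μ = ∑' k, g k * μ {ω | X ω = k} := by
        rw [← lintegral_map (measurable_from_nat) hXm, lintegral_countable']
        exact tsum_congr fun k => by rw [Measure.map_apply hXm (measurableSet_singleton k)]; rfl
    _ = ∑ k ∈ Icc 1 M, k * μ {ω | X ω = k} := by
        rw [tsum_eq_sum (s := Icc 1 M)]
        · refine sum_congr rfl fun k hk => ?_
          simp [g, (mem_Icc.1 hk).2]
        · intro k hk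
          rcases Nat.eq_zero_or_pos k with rfl | hk0
          · simp [g]
          · simp [g, show ¬ k ≤ M from fun h => hk (mem_Icc.2 ⟨hk0, h⟩)]
    _ ≤ ∑ k ∈ Icc 1 M, ENNReal.ofReal (1 / (2 * √k)) :=
        sum_le_sum fun k hk => hX k (by simp at hk; omega)
    _ ≤ ENNReal.ofReal √M := by
        rw [← ENNReal.ofReal_sum_of_nonneg fun _ _ => by positivity]
        exact ENNReal.ofReal_le_ofReal (sum_Icc_one_div_two_mul_sqrt_le M)

lemma measure_lt_sum_le {ι : Type*} (s : Finset ι) {X : ι → Ω → ℕ}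
    (hX : ∀ i, SizeBiasedMassBound μ (X i)) (hXm : ∀ i, Measurable (X i)) {M : ℕ} (hM : M ≠ 0) :
    μ {ω | M < ∑ i ∈ s, X i ω} ≤ ENNReal.ofReal (2 * #s / √M) := by
  let T : ι → Ω → ℝ≥0∞ := fun i ω => ((if X i ω ≤ M then X i ω else 0 : ℕ) : ℝ≥0∞)
  have hT : ∀ i, Measurable (T i) := fun i =>
    measurable_from_nat.comp (Measurable.ite (hXm i measurableSet_Iic) (hXm i) measurable_const)
  have hsub : {ω | M < ∑ i ∈ s, X i ω}
      ⊆ (⋃ i ∈ s, {ω | M < X i ω}) ∪ {ω | (M : ℝ≥0∞) ≤ ∑ i ∈ s, T i ω} := by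
    intro ω hω
    by_cases h : ∃ i ∈ s, M < X i ω
    · obtain ⟨i, hi, hXi⟩ := h
      exact Or.inl (Set.mem_biUnion hi hXi)
    · push Not at h
      refine Or.inr ?_
      simp only [Set.mem_ofPred_eq, T, ← Nat.cast_sum, Nat.cast_le] at hω ⊢
      rw [sum_congr rfl fun i hi => if_pos (h i hi)]
      exact hω.le
  have hinvsqrt : ENNReal.ofReal √M / M = ENNReal.ofReal (1 / √M) := by
    rw [← ENNReal.ofReal_natCast, ← ENNReal.ofReal_div_of_pos (by positivity), sqrt_div_self']
  calc μ {ω | M < ∑ i ∈ s, X i ω}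
      ≤ μ (⋃ i ∈ s, {ω | M < X i ω}) + μ {ω | (M : ℝ≥0∞) ≤ ∑ i ∈ s, T i ω} :=
        (measure_mono hsub).trans (measure_union_le _ _)
    _ ≤ ∑ i ∈ s, μ {ω | M < X i ω} + (∫⁻ ω, ∑ i ∈ s, T i ω ∂μ) / M :=
        add_le_add (measure_biUnion_finset_le _ _)
          (meas_ge_le_lintegral_div (Finset.measurable_sum _ fun i _ => hT i).aemeasurable
            (by simp [hM]) (by simp))
    _ ≤ #s * ENNReal.ofReal (1 / √M) + #s * ENNReal.ofReal √M / M := by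
        rw [lintegral_finsetSum _ fun i _ => hT i]
        gcongr
        · exact (sum_le_sum fun i _ => (hX i).measure_lt_le hM).trans_eq (by simp)
        · exact (sum_le_sum fun i _ => (hX i).lintegral_truncation_le (hXm i) M).trans_eq (by simp)
    _ = ENNReal.ofReal (2 * #s / √M) := by
        rw [mul_div_assoc, hinvsqrt, ← ENNReal.ofReal_natCast, ← ENNReal.ofReal_mul (by positivity),
          ← ENNReal.ofReal_add (by positivity) (by positivity)]
        congr 1
        ring

end SizeBiasedMassBound

lemma measure_setOf_eventually_mem_le {A : ℕ → Set Ω} {c : ℝ≥0∞}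
    (h : ∀ᶠ n in atTop, μ (A n) ≤ c) : μ {ω | ∀ᶠ n in atTop, ω ∈ A n} ≤ c := by
  obtain ⟨n₀, hn₀⟩ := eventually_atTop.1 h
  have hset : {ω | ∀ᶠ n in atTop, ω ∈ A n} = ⋃ m, ⋂ n ≥ m, A n := by
    ext ω
    simp [eventually_atTop]
  have hmono : Monotone fun m => ⋂ n ≥ m, A n := fun m m' hm =>
    Set.biInter_mono (fun n hn => le_trans hm hn) fun _ _ => le_rfl
  rw [hset, hmono.measure_iUnion]
  exact iSup_le fun m => (measure_mono (Set.biInter_subset_of_mem (le_max_left m n₀))).trans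
    (hn₀ _ (le_max_right m n₀))

lemma ae_exists_of_tendsto_measure_le {P : ℕ → Ω → Prop} {ε : ℕ → ℝ≥0∞}
    (hε : Tendsto ε atTop (nhds 0)) (h : ∀ C, μ {ω | ¬ P C ω} ≤ ε C) :
    ∀ᵐ ω ∂μ, ∃ C, P C ω :=
  ae_iff.2 <| le_antisymm
    (ge_of_tendsto' hε fun C =>
      (measure_mono (Set.ofPred_subset_ofPred.2 fun _ hω hP => hω ⟨C, hP⟩)).trans (h C)) bot_le

lemma SizeBiasedMassBound.ae_exists_frequently_sum_le {X : ℕ → Ω → ℕ}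
    (hX : ∀ i, SizeBiasedMassBound μ (X i)) (hXm : ∀ i, Measurable (X i)) :
    ∀ᵐ ω ∂μ, ∃ C : ℕ, ∃ᶠ N in atTop, ∑ i ∈ Icc 1 (2 * N), X i ω ≤ (C + 1) * (2 * N) ^ 2 := by
  refine ae_exists_of_tendsto_measure_le (ε := fun C => ENNReal.ofReal (2 / √(C + 1 : ℕ)))
    ?_ fun C => ?_
  · rw [← ENNReal.ofReal_zero]
    exact ENNReal.tendsto_ofReal (tendsto_const_nhds.div_atTop
      (tendsto_sqrt_atTop.comp (tendsto_natCast_atTop_atTop.comp (tendsto_add_atTop_nat 1))))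
  simp only [not_frequently, not_le]
  refine measure_setOf_eventually_mem_le ((eventually_ge_atTop 1).mono fun N hN => ?_)
  refine (SizeBiasedMassBound.measure_lt_sum_le _ hX hXm (by positivity)).trans_eq ?_
  congr 1
  rw [Nat.card_Icc, Nat.add_sub_cancel]
  push_cast
  rw [sqrt_mul (by positivity), sqrt_sq (by positivity)]
  field_simp

section TotalProgeny

open Lukasiewicz

variable {ξ : ℕ → Ω → ℕ}

lemma measurable_sInf_hittingTimes (hmeas : ∀ j, Measurable (ξ j)) :
    Measurable fun ω => sInf (hittingTimes fun j => ξ j ω) :=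
  measurable_sInf_setOf fun n => by measurability

lemma measure_sInf_hittingTimes_eq (hind : iIndepFun ξ μ) (hmeas : ∀ j, Measurable (ξ j))
    (hpois : ∀ j k, μ {ω | ξ j ω = k} = ENNReal.ofReal (exp (-1) / k !)) {k : ℕ} (hk : k ≠ 0) :
    μ {ω | sInf (hittingTimes fun j => ξ j ω) = k}
      = ∑' a : firstPassages k, ∏ j, ENNReal.ofReal (exp (-1) / (a.1 j)!) := by
  let f : Ω → Fin k → ℕ := fun ω j => ξ j ω
  have hf : Measurable f := measurable_pi_lambda _ fun j => hmeas j
  have hset : {ω | sInf (hittingTimes fun j => ξ j ω) = k} = f ⁻¹' firstPassages k := by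
    ext ω
    exact sInf_hittingTimes_eq_iff hk
  rw [hset, ← tsum_measure_preimage_singleton (Set.to_countable _)
    fun a _ => hf (measurableSet_singleton a)]
  refine tsum_congr fun a => ?_
  have hfiber : f ⁻¹' {a.1} = {ω | ∀ j : Fin k, ξ j ω = a.1 j} := by
    ext ω
    simp [f, funext_iff]
  rw [hfiber, (hind.precomp Fin.val_injective).measure_forall_eq]
  simp [hpois]

lemma sizeBiasedMassBound_sInf_hittingTimes (hind : iIndepFun ξ μ)
    (hmeas : ∀ j, Measurable (ξ j))
    (hpois : ∀ j k, μ {ω | ξ j ω = k} = ENNReal.ofReal (exp (-1) / k !)) :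
    SizeBiasedMassBound μ fun ω => sInf (hittingTimes fun j => ξ j ω) := fun k hk => by
  have : NeZero k := ⟨hk⟩
  rw [measure_sInf_hittingTimes_eq hind hmeas hpois hk]
  calc _ ≤ _ := card_mul_tsum_firstPassages_le fun n => ENNReal.ofReal (exp (-1) / n !)
    _ = _ := tsum_bridges_prod_poisson hk
    _ ≤ _ := ENNReal.ofReal_le_ofReal (exp_neg_mul_pow_div_factorial_le hk)

/-- A tree whose root has no child has total progeny `1`; this happens independently in each row
of `ξ` with probability `e⁻¹`. -/
lemma ae_exists_sum_sInf_hittingTimes_ne_zero {ξ : ℕ × ℕ → Ω → ℕ} (hind : iIndepFun ξ μ)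
    (hmeas : ∀ p, Measurable (ξ p))
    (hpois : ∀ p k, μ {ω | ξ p ω = k} = ENNReal.ofReal (exp (-1) / k !)) :
    ∀ᵐ ω ∂μ, ∃ n, ∑ i ∈ Icc 1 n, sInf (hittingTimes fun j => ξ (i, j) ω) ≠ 0 := by
  have hroot : ∀ᵐ ω ∂μ, ∃ n, ξ (n + 1, 0) ω ∈ ({0} : Set ℕ) :=
    (hind.precomp fun m n h => by simpa using h).ae_exists_mem (fun n => hmeas _)
      (measurableSet_singleton 0) (q := ENNReal.ofReal (exp (-1))) (by simp [exp_pos])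
      fun n => (hpois _ 0).trans (by simp) |>.ge
  filter_upwards [hroot] with ω ⟨n, hn⟩
  refine ⟨n + 1, Nat.pos_iff_ne_zero.1 (lt_of_lt_of_le ?_ (single_le_sum (fun i _ => Nat.zero_le _)
    (mem_Icc.2 ⟨Nat.le_add_left 1 n, le_rfl⟩)))⟩
  rw [sInf_hittingTimes_eq_one (x := fun j => ξ (n + 1, j) ω) hn]
  exact Nat.one_pos

end TotalProgeny

end

theorem sum_inv_sqrt_progeny_diverges_general
    {Ω : Type*} [MeasurableSpace Ω] (μ : Measure Ω)
    (ξ : ℕ × ℕ → Ω → ℕ)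
    (hmeas : ∀ p, Measurable (ξ p))
    (hindep : iIndepFun ξ μ)
    (hpois : ∀ p k, μ {ω | ξ p ω = k} = ENNReal.ofReal (Real.exp (-1) / k.factorial))
    (X : ℕ → Ω → ℕ)
    (hX : ∀ i ω, X i ω =
      sInf {n : ℕ | 1 ≤ n ∧ (∑ j ∈ Finset.range n, ξ (i, j) ω) + 1 = n})
    (S : ℕ → Ω → ℕ)
    (hS : ∀ n ω, S n ω = ∑ i ∈ Finset.Icc 1 n, X i ω) :
    ∀ᵐ ω ∂μ, Tendsto
      (fun N => ∑ n ∈ Finset.Icc 1 N, 1 / Real.sqrt (S n ω)) atTop atTop := by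
  have hXdef : ∀ i, X i = fun ω => sInf (Lukasiewicz.hittingTimes fun j => ξ (i, j) ω) :=
    fun i => funext (hX i)
  obtain rfl : S = fun n ω => ∑ i ∈ Icc 1 n, X i ω := funext₂ hS
  have hrow : ∀ i, iIndepFun (fun j => ξ (i, j)) μ := fun i =>
    hindep.precomp fun j j' h => (Prod.mk.inj h).2
  have hmass : ∀ i, SizeBiasedMassBound μ (X i) := fun i => hXdef i ▸
    sizeBiasedMassBound_sInf_hittingTimes (hrow i) (fun j => hmeas _) fun j => hpois _
  have hXm : ∀ i, Measurable (X i) := fun i => hXdef i ▸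
    measurable_sInf_hittingTimes fun j => hmeas _
  filter_upwards [ae_exists_sum_sInf_hittingTimes_ne_zero hindep hmeas hpois,
    SizeBiasedMassBound.ae_exists_frequently_sum_le hmass hXm] with ω ⟨n₀, hn₀⟩ ⟨C, hC⟩
  simp only [Lukasiewicz.hittingTimes, ← hX] at hn₀
  have hmono : Monotone fun n => ∑ i ∈ Icc 1 n, X i ω := fun a b hab =>
    sum_le_sum_of_subset (Icc_subset_Icc le_rfl hab)
  exact tendsto_sum_one_div_sqrt_atTop hmono hn₀ (C := (C + 1 : ℕ)) (by positivity)
    (hC.mono fun N hN => by exact_mod_cast hN)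

/-- If `X 1, X 2, …` are i.i.d. copies of the total progeny of a critical
Galton–Watson tree with `Poisson(1)` offspring and `S n = X 1 + ⋯ + X n`, then
`∑ 1/√(S n) = ∞` almost surely.

Each copy `X i` of the total progeny is formalized via the Łukasiewicz-path
(Dwass/Otter) characterization from its own i.i.d. `Poisson(1)` offspring
sequence `ξ (i, ·)`, with the whole array `ξ` i.i.d. -/
theorem sum_inv_sqrt_progeny_diverges
    {Ω : Type*} [MeasurableSpace Ω] (μ : Measure Ω) [IsProbabilityMeasure μ]
    (ξ : ℕ × ℕ → Ω → ℕ)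
    (hmeas : ∀ p, Measurable (ξ p))
    (hindep : iIndepFun ξ μ)
    (hpois : ∀ p k, μ {ω | ξ p ω = k} = ENNReal.ofReal (Real.exp (-1) / k.factorial))
    (X : ℕ → Ω → ℕ)
    (hX : ∀ i ω, X i ω =
      sInf {n : ℕ | 1 ≤ n ∧ (∑ j ∈ Finset.range n, ξ (i, j) ω) + 1 = n})
    (S : ℕ → Ω → ℕ)
    (hS : ∀ n ω, S n ω = ∑ i ∈ Finset.Icc 1 n, X i ω) :
    ∀ᵐ ω ∂μ, Tendsto
      (fun N => ∑ n ∈ Finset.Icc 1 N, 1 / Real.sqrt (S n ω)) atTop atTop :=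
  sum_inv_sqrt_progeny_diverges_general μ ξ hmeas hindep hpois X hX S hS
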